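/- arXiv:1004.5012 — 4 statements merged into one kernel-verified Lean document; each statement's English description precedes it below -/
import Mathlib

section
/- Let G = (V, E) be a connected graph on n ≥ 1 vertices and let N be a positive integer. Then the number of triples (A, f, f̄) such that (A, f) is a partial bucket function on G and f̄ is a bucket extension of f satisfying f̄(V) ⊆ {1, 2, …, N} is at most 2N · 5^{n−1}. -/
/-- `fbar : V → ℤ` is a bucket extension of `f` (given on `A`). -/
def IsBucketExtension {V : Type*} (G : SimpleGraph V) (A : Set V) (f fbar : V → ℤ) : Prop :=
  (∀ v ∈ A, fbar v = f v) ∧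
  (∀ u v, G.Adj u v → |fbar u - fbar v| ≤ 1) ∧
  (∀ u v, G.Adj u v → u ∈ A → v ∉ A → fbar v ≤ fbar u)

/-- The set of triples `(A, f, f̄)` where `(A,f)` is a partial bucket function (encoded by
`f : V → ℤ` vanishing outside `A`) and `f̄` is a bucket extension of `f` with values in
`{1,…,N}`. -/
def bucketTriples {V : Type*} (G : SimpleGraph V) (N : ℕ) :
    Set (Finset V × (V → ℤ) × (V → ℤ)) :=
  {t | (∀ v ∉ t.1, t.2.1 v = 0) ∧
       IsBucketExtension G ↑t.1 t.2.1 t.2.2 ∧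
       (∀ v, t.2.2 v ∈ Finset.Icc (1 : ℤ) (N : ℤ))}

/-- encoding of (child membership, difference) into 5 values, given parent membership. -/
def encB (pb cb : Bool) (d : ℤ) : ℤ :=
  (if cb then d + 1 else d + 4) - (if pb then 0 else 1)

lemma encB_range (pb cb : Bool) {d : ℤ}
    (hd : -1 ≤ d) (hd1 : d ≤ 1)
    (hA : pb = true → cb = false → d ≠ 1)
    (hB : pb = false → cb = true → d ≠ -1) :
    0 ≤ encB pb cb d ∧ encB pb cb d ≤ 4 := by
  cases pb <;> cases cb <;> simp [encB] at hA hB ⊢ <;> omega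

lemma encB_inj (pb cb cb' : Bool) {d d' : ℤ}
    (hd : -1 ≤ d) (hd1 : d ≤ 1) (hd' : -1 ≤ d') (hd1' : d' ≤ 1)
    (hA : pb = true → cb = false → d ≠ 1)
    (hB : pb = false → cb = true → d ≠ -1)
    (hA' : pb = true → cb' = false → d' ≠ 1)
    (hB' : pb = false → cb' = true → d' ≠ -1)
    (h : encB pb cb d = encB pb cb' d') : cb = cb' ∧ d = d' := by
  cases pb <;> cases cb <;> cases cb' <;>
    simp [encB] at hA hB hA' hB' h ⊢ <;> omega

lemma exists_parent {V : Type*} (G : SimpleGraph V) (hG : G.Connected) (root v : V)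
    (hv : v ≠ root) : ∃ u, G.Adj u v ∧ G.dist root u + 1 = G.dist root v := by
  obtain ⟨w, hw⟩ := hG.exists_walk_length_eq_dist v root
  have hpos : 0 < G.dist v root := hG.pos_dist_of_ne hv
  cases w with
  | nil => exact absurd rfl hv
  | @cons _ u _ h p =>
    refine ⟨u, h.symm, ?_⟩
    have h1 : G.dist root u ≤ p.length := by
      rw [SimpleGraph.dist_comm]; exact SimpleGraph.dist_le p
    have h2 : G.dist root v ≤ G.dist root u + 1 := by
      calc G.dist root v ≤ G.dist root u + G.dist u v := hG.dist_triangle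
        _ ≤ G.dist root u + 1 := by
            have := SimpleGraph.dist_le (SimpleGraph.Walk.cons h.symm SimpleGraph.Walk.nil)
            simp [SimpleGraph.Walk.length_cons] at this
            omega
    have h3 : G.dist root v = p.length + 1 := by
      rw [SimpleGraph.dist_comm]; rw [← hw]; simp [SimpleGraph.Walk.length_cons]
    omega

/-- in a connected graph on `n ≥ 1` vertices there are at most `2N · 5^(n-1)`
triples `(A, f, f̄)` with `f̄(V) ⊆ {1,…,N}`. -/
theorem bucketTriples_card_le {V : Type*} [Fintype V] (G : SimpleGraph V) (n N : ℕ)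
    (hn : Fintype.card V = n) (hn1 : 1 ≤ n) (hN : 1 ≤ N) (hG : G.Connected) :
    (bucketTriples G N).Finite ∧ (bucketTriples G N).ncard ≤ 2 * N * 5 ^ (n - 1) := by
  classical
  have hne : Nonempty V := Fintype.card_pos_iff.mp (by omega)
  obtain ⟨root⟩ := hne
  choose par hadj hdist using fun v : {v : V // v ≠ root} => exists_parent G hG root v v.2
  have hNpos : (1 : ℤ) ≤ (N : ℤ) := by exact_mod_cast hN
  let E : Finset V × (V → ℤ) × (V → ℤ) →
      Bool × (Finset.Icc (1:ℤ) (N:ℤ)) × ({v : V // v ≠ root} → Fin 5) := fun t =>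
    (decide (root ∈ t.1),
     ⟨max 1 (min (N:ℤ) (t.2.2 root)), by simp [Finset.mem_Icc]; omega⟩,
     fun v => ⟨(max 0 (min 4 (encB (decide (par v ∈ t.1)) (decide ((v:V) ∈ t.1))
        (max (-1) (min 1 (t.2.2 (v:V) - t.2.2 (par v))))))).toNat, by omega⟩)
  have hinj : Set.InjOn E (bucketTriples G N) := by
    rintro ⟨A, f, fb⟩ ht ⟨A', f', fb'⟩ ht' hE
    obtain ⟨hf0, ⟨hag, hlip, hbd⟩, hrg⟩ := ht
    obtain ⟨hf0', ⟨hag', hlip', hbd'⟩, hrg'⟩ := ht'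
    dsimp only at hf0 hag hlip hbd hrg hf0' hag' hlip' hbd' hrg'
    simp only [E, Prod.mk.injEq, Subtype.mk.injEq] at hE
    obtain ⟨h1, h2, h3⟩ := hE
    have key : ∀ d : ℕ, ∀ v, G.dist root v = d → fb v = fb' v ∧ (v ∈ A ↔ v ∈ A') := by
      intro d
      induction d using Nat.strong_induction_on with
      | _ d ih =>
        intro v hdv
        by_cases hv : v = root
        · subst hv
          constructor
          · have m1 := hrg v; have m2 := hrg' v
            simp [Finset.mem_Icc] at m1 m2
            omega
          · exact decide_eq_decide.mp h1
        · have hadjv : G.Adj (par ⟨v, hv⟩) v := hadj ⟨v, hv⟩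
          have hd2 : G.dist root (par ⟨v, hv⟩) + 1 = G.dist root v := hdist ⟨v, hv⟩
          have hdvpos : 0 < G.dist root v := hG.pos_dist_of_ne (Ne.symm hv)
          have ihu := ih (G.dist root (par ⟨v, hv⟩)) (by omega) (par ⟨v, hv⟩) rfl
          have h3v := congrArg (fun g => ((g ⟨v, hv⟩ : Fin 5) : ℕ)) h3
          simp only at h3v
          have hl : |fb (par ⟨v, hv⟩) - fb v| ≤ 1 := hlip _ _ hadjv
          have hl' : |fb' (par ⟨v, hv⟩) - fb' v| ≤ 1 := hlip' _ _ hadjv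
          rw [abs_le] at hl hl'
          set dd := fb v - fb (par ⟨v, hv⟩) with hdd
          set dd' := fb' v - fb' (par ⟨v, hv⟩) with hdd'
          have e1 : max (-1) (min 1 dd) = dd := by omega
          have e1' : max (-1) (min 1 dd') = dd' := by omega
          have fA : decide ((par ⟨v, hv⟩) ∈ A) = true → decide (v ∈ A) = false → dd ≠ 1 := by
            simp only [decide_eq_true_eq, decide_eq_false_iff_not]
            intro hu hvn
            have := hbd _ _ hadjv hu hvn
            omega
          have fB : decide ((par ⟨v, hv⟩) ∈ A) = false → decide (v ∈ A) = true → dd ≠ -1 := by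
            simp only [decide_eq_true_eq, decide_eq_false_iff_not]
            intro hu hvn
            have := hbd _ _ hadjv.symm hvn hu
            omega
          have fA' : decide ((par ⟨v, hv⟩) ∈ A') = true → decide (v ∈ A') = false → dd' ≠ 1 := by
            simp only [decide_eq_true_eq, decide_eq_false_iff_not]
            intro hu hvn
            have := hbd' _ _ hadjv hu hvn
            omega
          have fB' : decide ((par ⟨v, hv⟩) ∈ A') = false → decide (v ∈ A') = true → dd' ≠ -1 := by
            simp only [decide_eq_true_eq, decide_eq_false_iff_not]
            intro hu hvn
            have := hbd' _ _ hadjv.symm hvn hu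
            omega
          have hpb : decide ((par ⟨v, hv⟩) ∈ A) = decide ((par ⟨v, hv⟩) ∈ A') :=
            decide_eq_decide.mpr ihu.2
          rw [e1, e1'] at h3v
          have hr1 := encB_range (decide ((par ⟨v, hv⟩) ∈ A)) (decide (v ∈ A))
            (by omega) (by omega) fA fB
          have hr2 := encB_range (decide ((par ⟨v, hv⟩) ∈ A')) (decide (v ∈ A'))
            (by omega) (by omega) fA' fB'
          have henc : encB (decide ((par ⟨v, hv⟩) ∈ A)) (decide (v ∈ A)) dd
              = encB (decide ((par ⟨v, hv⟩) ∈ A')) (decide (v ∈ A')) dd' := by omega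
          rw [← hpb] at henc
          have := encB_inj (decide ((par ⟨v, hv⟩) ∈ A)) (decide (v ∈ A)) (decide (v ∈ A'))
            (by omega) (by omega) (by omega) (by omega) fA fB (hpb ▸ fA') (hpb ▸ fB') henc
          refine ⟨by omega, decide_eq_decide.mp this.1⟩
    have hAA : A = A' := Finset.ext fun v => (key _ v rfl).2
    have hfb : fb = fb' := funext fun v => (key _ v rfl).1
    have hf : f = f' := funext fun v => by
      by_cases hvA : v ∈ A
      · rw [← hag v hvA, ← hag' v (hAA ▸ hvA), hfb]
      · rw [hf0 v hvA, hf0' v (by rwa [← hAA])]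
    simp [Prod.ext_iff]
    exact ⟨hAA, hf, hfb⟩
  have hfin : (bucketTriples G N).Finite :=
    Set.Finite.of_finite_image (Set.toFinite _) hinj
  refine ⟨hfin, ?_⟩
  calc (bucketTriples G N).ncard = (E '' (bucketTriples G N)).ncard :=
        (Set.ncard_image_of_injOn hinj).symm
    _ ≤ (Set.univ : Set (Bool × (Finset.Icc (1:ℤ) (N:ℤ)) × ({v : V // v ≠ root} → Fin 5))).ncard :=
        Set.ncard_le_ncard (Set.subset_univ _) (Set.toFinite _)
    _ = Nat.card (Bool × (Finset.Icc (1:ℤ) (N:ℤ)) × ({v : V // v ≠ root} → Fin 5)) :=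
        Set.ncard_univ _
    _ = 2 * N * 5 ^ (n - 1) := by
        have hIcc : Nat.card (Finset.Icc (1:ℤ) (N:ℤ)) = N := by
          rw [Nat.card_eq_fintype_card, Fintype.card_coe, Int.card_Icc]
          omega
        have hsub : Nat.card {v : V // v ≠ root} = n - 1 := by
          rw [Nat.card_eq_fintype_card]
          simp [Fintype.card_subtype_compl, hn]
        rw [Nat.card_prod, Nat.card_prod, Nat.card_fun, hIcc, hsub]
        simp [mul_assoc]
end

section
/- Let G = (V, E) be a graph with |V| = n, let 1 ≤ b < n, and let π be a b-ordering of G. For 0 ≤ k ≤ n define A_k = {v ∈ V : π(v) ∈ Pos_k} and f_k : A_k → ℤ by f_k(v) = segment(π(v)). Then every (A_k, f_k) is a state, and for every 0 ≤ k < n the state (A_{k+1}, f_{k+1}) is a successor of the state (A_k, f_k). -/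
/-- `segment` of a position `i` (positions are `1,…,n`): `⌈i/(b+1)⌉`. -/
def bwSegment (b i : ℕ) : ℕ := (i + b) / (b + 1)

/-- `color` of a position `i`: `((i-1) mod (b+1)) + 1`. -/
def bwColor (b i : ℕ) : ℕ := (i - 1) % (b + 1) + 1

/-- The rank of position `i` in the color order on positions `{1,…,n}`: the number of
positions that are lexicographically smaller with respect to `(color, segment)`. -/
def colOrderRank (n b i : ℕ) : ℕ :=
  ((Finset.Icc 1 n).filter (fun j =>
    bwColor b j < bwColor b i ∨ (bwColor b j = bwColor b i ∧ bwSegment b j < bwSegment b i))).card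

/-- `Pos_k`: the set of the first `k` positions in the color order. -/
def PosK (n b k : ℕ) : Finset ℕ :=
  (Finset.Icc 1 n).filter (fun i => colOrderRank n b i < k)

/-- `fbar : V → ℤ` is a bucket extension of `f` (given on `A`). -/
lemma bwSegment_eq (b i : ℕ) (hi : 1 ≤ i) : bwSegment b i = (i-1)/(b+1) + 1 := by
  unfold bwSegment
  have h : i + b = (i - 1) + (b+1) := by omega
  rw [h, Nat.add_div_right _ (Nat.succ_pos b)]

lemma bw_decomp (b i : ℕ) (hi : 1 ≤ i) :
    ∃ q r, bwSegment b i = q + 1 ∧ bwColor b i = r + 1 ∧ i = (b+1)*q + r + 1 ∧ r ≤ b := by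
  refine ⟨(i-1)/(b+1), (i-1)%(b+1), bwSegment_eq b i hi, rfl, ?_, ?_⟩
  · have hd := Nat.div_add_mod (i-1) (b+1)
    rw [hd]; omega
  · exact Nat.lt_succ_iff.mp (Nat.mod_lt _ (Nat.succ_pos b))

lemma q_bound2 {b qi qj ri rj : ℕ} (hle : ri ≤ rj)
    (h : (b+1)*qj + rj ≤ (b+1)*qi + ri + b) : qj ≤ qi := by
  by_contra hq
  push_neg at hq
  have h1 : (b+1)*(qi+1) ≤ (b+1)*qj := Nat.mul_le_mul_left _ hq
  have h2 : (b+1)*(qi+1) = (b+1)*qi + (b+1) := by ring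
  omega

lemma q_bound {b qi qj ri rj : ℕ} (hri : ri ≤ b) (hrj : rj ≤ b)
    (h : (b+1)*qi + ri ≤ (b+1)*qj + rj + b) : qi ≤ qj + 1 := by
  by_contra hq
  push_neg at hq
  have h1 : (b+1)*(qj+2) ≤ (b+1)*qi := Nat.mul_le_mul_left _ hq
  have h2 : (b+1)*(qj+2) = (b+1)*qj + 2*(b+1) := by ring
  omega

/-- lex order predicate used by `colOrderRank`. -/
def bwLex (b i j : ℕ) : Prop :=
  bwColor b i < bwColor b j ∨ (bwColor b i = bwColor b j ∧ bwSegment b i < bwSegment b j)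

instance bwLexDec (b i j : ℕ) : Decidable (bwLex b i j) :=
  inferInstanceAs (Decidable (_ ∨ _))

lemma bwLex_trans {b i j k : ℕ} (h1 : bwLex b i j) (h2 : bwLex b j k) : bwLex b i k := by
  unfold bwLex at *; omega

lemma bwLex_irrefl (b i : ℕ) : ¬ bwLex b i i := by unfold bwLex; omega

lemma bwLex_trichotomy (b i j : ℕ) (hi : 1 ≤ i) (hj : 1 ≤ j) :
    bwLex b i j ∨ i = j ∨ bwLex b j i := by
  obtain ⟨qi, ri, hsi, hci, hii, hri⟩ := bw_decomp b i hi
  obtain ⟨qj, rj, hsj, hcj, hjj, hrj⟩ := bw_decomp b j hj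
  unfold bwLex
  rcases lt_trichotomy ri rj with h | h | h
  · left; left; omega
  · rcases lt_trichotomy qi qj with h' | h' | h'
    · left; right; omega
    · right; left
      subst h h'
      omega
    · right; right; right; omega
  · right; right; left; omega

/-- key: in-band and lex-smaller implies segment not smaller. -/
lemma seg_le_of_lex {b i j : ℕ} (hi : 1 ≤ i) (hj : 1 ≤ j)
    (h1 : i ≤ j + b) (h2 : j ≤ i + b) (hlex : bwLex b i j) :
    bwSegment b j ≤ bwSegment b i := by
  obtain ⟨qi, ri, hsi, hci, hii, hri⟩ := bw_decomp b i hi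
  obtain ⟨qj, rj, hsj, hcj, hjj, hrj⟩ := bw_decomp b j hj
  unfold bwLex at hlex
  rcases hlex with h | ⟨hc, hs⟩
  · -- ri < rj : show qj ≤ qi
    have : qj ≤ qi := q_bound2 (b:=b) (ri:=ri) (rj:=rj) (by omega) (by omega)
    omega
  · -- same color: qi < qj impossible in band
    exfalso
    have : qj ≤ qi := q_bound2 (b:=b) (by omega : ri ≤ rj) (by omega)
    omega

lemma seg_band {b i j : ℕ} (hi : 1 ≤ i) (hj : 1 ≤ j)
    (h1 : i ≤ j + b) (h2 : j ≤ i + b) :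
    bwSegment b i ≤ bwSegment b j + 1 ∧ bwSegment b j ≤ bwSegment b i + 1 := by
  obtain ⟨qi, ri, hsi, hci, hii, hri⟩ := bw_decomp b i hi
  obtain ⟨qj, rj, hsj, hcj, hjj, hrj⟩ := bw_decomp b j hj
  constructor
  · have := q_bound hri hrj (by omega : (b+1)*qi + ri ≤ (b+1)*qj + rj + b); omega
  · have := q_bound hrj hri (by omega : (b+1)*qj + rj ≤ (b+1)*qi + ri + b); omega

lemma colOrderRank_eq (n b i : ℕ) :
    colOrderRank n b i = ((Finset.Icc 1 n).filter (fun j => bwLex b j i)).card := rfl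

lemma rank_lt_rank {n b i j : ℕ} (hi : i ∈ Finset.Icc 1 n) (hj : j ∈ Finset.Icc 1 n)
    (h : bwLex b i j) : colOrderRank n b i < colOrderRank n b j := by
  rw [colOrderRank_eq, colOrderRank_eq]
  apply Finset.card_lt_card
  constructor
  · intro x hx
    simp only [Finset.mem_filter] at *
    exact ⟨hx.1, bwLex_trans hx.2 h⟩
  · intro hsub
    have := hsub (Finset.mem_filter.mpr ⟨hi, h⟩)
    exact bwLex_irrefl b i (Finset.mem_filter.mp this).2

lemma rank_lt_n {n b i : ℕ} (hi : i ∈ Finset.Icc 1 n) : colOrderRank n b i < n := by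
  rw [colOrderRank_eq]
  have hsub : (Finset.Icc 1 n).filter (fun j => bwLex b j i) ⊆ (Finset.Icc 1 n).erase i := by
    intro x hx
    simp only [Finset.mem_filter] at hx
    exact Finset.mem_erase.mpr ⟨fun he => bwLex_irrefl b i (he ▸ hx.2), hx.1⟩
  calc ((Finset.Icc 1 n).filter (fun j => bwLex b j i)).card
      ≤ ((Finset.Icc 1 n).erase i).card := Finset.card_le_card hsub
    _ < (Finset.Icc 1 n).card := Finset.card_erase_lt_of_mem hi
    _ = n := by rw [Nat.card_Icc]; omega

lemma lex_of_rank_lt {n b i j : ℕ} (hi : i ∈ Finset.Icc 1 n) (hj : j ∈ Finset.Icc 1 n)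
    (h : colOrderRank n b i < colOrderRank n b j) : bwLex b i j := by
  have hi1 : 1 ≤ i := (Finset.mem_Icc.mp hi).1
  have hj1 : 1 ≤ j := (Finset.mem_Icc.mp hj).1
  rcases bwLex_trichotomy b i j hi1 hj1 with h' | h' | h'
  · exact h'
  · subst h'; omega
  · exact absurd (rank_lt_rank hj hi h') (by omega)

lemma rank_injOn {n b i j : ℕ} (hi : i ∈ Finset.Icc 1 n) (hj : j ∈ Finset.Icc 1 n)
    (h : colOrderRank n b i = colOrderRank n b j) : i = j := by
  rcases bwLex_trichotomy b i j (Finset.mem_Icc.mp hi).1 (Finset.mem_Icc.mp hj).1 with h' | h' | h'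
  · exact absurd (rank_lt_rank hi hj h') (by omega)
  · exact h'
  · exact absurd (rank_lt_rank hj hi h') (by omega)

lemma rank_image (n b : ℕ) :
    (Finset.Icc 1 n).image (colOrderRank n b) = Finset.range n := by
  apply Finset.eq_of_subset_of_card_le
  · intro x hx
    obtain ⟨i, hi, rfl⟩ := Finset.mem_image.mp hx
    exact Finset.mem_range.mpr (rank_lt_n hi)
  · rw [Finset.card_range, Finset.card_image_of_injOn (fun i hi j hj h => rank_injOn hi hj h),
      Nat.card_Icc]
    omega

lemma rank_surj {n b k : ℕ} (hk : k < n) : ∃ i ∈ Finset.Icc 1 n, colOrderRank n b i = k := by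
  have : k ∈ (Finset.Icc 1 n).image (colOrderRank n b) := by
    rw [rank_image]; exact Finset.mem_range.mpr hk
  obtain ⟨i, hi, h⟩ := Finset.mem_image.mp this
  exact ⟨i, hi, h⟩

lemma card_PosK {n b k : ℕ} (hk : k ≤ n) : (PosK n b k).card = k := by
  have himg : (PosK n b k).image (colOrderRank n b) = Finset.range k := by
    apply Finset.Subset.antisymm
    · intro x hx
      obtain ⟨i, hi, rfl⟩ := Finset.mem_image.mp hx
      exact Finset.mem_range.mpr (Finset.mem_filter.mp hi).2
    · intro x hx
      obtain ⟨i, hi, rfl⟩ := rank_surj (n:=n) (b:=b) (lt_of_lt_of_le (Finset.mem_range.mp hx) hk)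
      exact Finset.mem_image.mpr ⟨i, Finset.mem_filter.mpr ⟨hi, Finset.mem_range.mp hx⟩, rfl⟩
  have := Finset.card_image_of_injOn (f := colOrderRank n b) (s := PosK n b k)
    (fun i hi j hj h => rank_injOn (Finset.mem_filter.mp hi).1 (Finset.mem_filter.mp hj).1 h)
  rw [himg, Finset.card_range] at this
  exact this.symm

/-- `(A, f)` is a partial bucket function. -/
def IsPartialBucketFunction {V : Type*} (G : SimpleGraph V) (A : Set V) (f : V → ℤ) : Prop :=
  ∃ fbar, IsBucketExtension G A f fbar

/-- `(A, f)` is a state: a partial bucket function whose multiset of values equals the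
multiset of segments of the first `|A|` positions in the color order. -/
def IsState {V : Type*} (G : SimpleGraph V) (n b : ℕ) (A : Finset V) (f : V → ℤ) : Prop :=
  IsPartialBucketFunction G ↑A f ∧
  A.val.map f = (PosK n b A.card).val.map (fun i => (bwSegment b i : ℤ))

/-- `(A', f')` is a successor of the state `(A, f)` with vertex `v`. -/
def IsSuccStateWith {V : Type*} [DecidableEq V] (G : SimpleGraph V) (n b : ℕ)
    (A : Finset V) (f : V → ℤ) (A' : Finset V) (f' : V → ℤ) (v : V) : Prop :=
  IsState G n b A f ∧ IsState G n b A' f' ∧ v ∉ A ∧ A' = insert v A ∧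
  (∀ u ∈ A, f' u = f u) ∧ ¬ ∃ u ∈ A, G.Adj u v ∧ f u < f' v

/-- The vertices placed by a `b`-ordering `π` on the first `k` positions in color order. -/
def orderedPrefix {V : Type*} [Fintype V] (n b : ℕ) (π : V ≃ Fin n) (k : ℕ) : Finset V :=
  Finset.univ.filter (fun v => (π v : ℕ) + 1 ∈ PosK n b k)

/-- from a `b`-ordering `π`, the pairs `(A_k, segment∘π)` are states and form
a successor chain. -/
theorem states_of_bOrdering {V : Type*} [Fintype V] [DecidableEq V] (G : SimpleGraph V)
    (n b : ℕ) (hn : Fintype.card V = n) (hb : 1 ≤ b) (hbn : b < n) (π : V ≃ Fin n)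
    (hband : ∀ u v, G.Adj u v → |(((π u : ℕ) + 1 : ℤ)) - (((π v : ℕ) + 1 : ℤ))| ≤ (b : ℤ)) :
    (∀ k ≤ n, IsState G n b (orderedPrefix n b π k)
        (fun v => (bwSegment b ((π v : ℕ) + 1) : ℤ))) ∧
    (∀ k < n, ∃ v, IsSuccStateWith G n b
        (orderedPrefix n b π k) (fun v => (bwSegment b ((π v : ℕ) + 1) : ℤ))
        (orderedPrefix n b π (k + 1)) (fun v => (bwSegment b ((π v : ℕ) + 1) : ℤ)) v) := by
  have hbn1 : 1 ≤ n := by omega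
  set g : V → ℕ := fun v => (π v : ℕ) + 1 with hg
  have hginj : Function.Injective g := by
    intro u v h
    apply π.injective
    exact Fin.ext (by simpa [hg] using h)
  have hgmem : ∀ v, g v ∈ Finset.Icc 1 n := by
    intro v
    have := (π v).isLt
    simp only [hg]
    exact Finset.mem_Icc.mpr ⟨by omega, by omega⟩
  have hg1 : ∀ v, 1 ≤ g v := fun v => (Finset.mem_Icc.mp (hgmem v)).1
  have hgsurj : ∀ i ∈ Finset.Icc 1 n, ∃ v, g v = i := by
    intro i hi
    rw [Finset.mem_Icc] at hi
    refine ⟨π.symm ⟨i - 1, by omega⟩, ?_⟩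
    simp only [hg, Equiv.apply_symm_apply]
    omega
  have hband' : ∀ u v, G.Adj u v → g u ≤ g v + b ∧ g v ≤ g u + b := by
    intro u v huv
    have := hband u v huv
    rw [abs_le] at this
    constructor <;> [have h := this.2; have h := this.1] <;>
      · simp only [hg]; omega
  have hmem : ∀ k v, v ∈ orderedPrefix n b π k ↔ colOrderRank n b (g v) < k := by
    intro k v
    simp only [orderedPrefix, PosK, Finset.mem_filter, Finset.mem_univ, true_and]
    exact ⟨fun h => h.2, fun h => ⟨hgmem v, h⟩⟩
  have hmap : ∀ k, (orderedPrefix n b π k).map ⟨g, hginj⟩ = PosK n b k := by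
    intro k
    ext i
    simp only [Finset.mem_map, Function.Embedding.coeFn_mk]
    constructor
    · rintro ⟨v, hv, rfl⟩
      exact Finset.mem_filter.mpr ⟨hgmem v, (hmem k v).mp hv⟩
    · intro hiP
      have hi : i ∈ Finset.Icc 1 n := (Finset.mem_filter.mp hiP).1
      obtain ⟨v, rfl⟩ := hgsurj i hi
      exact ⟨v, (hmem k v).mpr (Finset.mem_filter.mp hiP).2, rfl⟩
  have hstate : ∀ k ≤ n, IsState G n b (orderedPrefix n b π k)
      (fun v => (bwSegment b ((π v : ℕ) + 1) : ℤ)) := by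
    intro k hk
    constructor
    · refine ⟨fun v => (bwSegment b (g v) : ℤ), fun v _ => rfl, ?_, ?_⟩
      · intro u v huv
        obtain ⟨h1, h2⟩ := hband' u v huv
        have := seg_band (hg1 u) (hg1 v) h1 h2
        rw [abs_le]
        constructor <;> push_cast <;> omega
      · intro u v huv hu hv
        rw [Finset.mem_coe, hmem] at hu hv
        have hlex := lex_of_rank_lt (n := n) (b := b) (hgmem u) (hgmem v) (by omega)
        have := seg_le_of_lex (hg1 u) (hg1 v) (hband' u v huv).1 (hband' u v huv).2 hlex
        show (bwSegment b (g v) : ℤ) ≤ (bwSegment b (g u) : ℤ)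
        exact_mod_cast this
    · have hcard : (orderedPrefix n b π k).card = k := by
        rw [← Finset.card_map ⟨g, hginj⟩, hmap, card_PosK hk]
      rw [hcard, ← hmap k, Finset.map_val, Multiset.map_map]
      rfl
  refine ⟨hstate, ?_⟩
  intro k hk
  obtain ⟨i, hiIcc, hrank⟩ := rank_surj (n := n) (b := b) hk
  obtain ⟨v, rfl⟩ := hgsurj i hiIcc
  refine ⟨v, hstate k hk.le, hstate (k+1) hk, ?_, ?_, fun u _ => rfl, ?_⟩
  · rw [hmem]; omega
  · ext u
    rw [Finset.mem_insert, hmem, hmem]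
    constructor
    · intro h
      rcases Nat.lt_succ_iff_lt_or_eq.mp h with h | h
      · exact Or.inr h
      · exact Or.inl (hginj (rank_injOn (hgmem u) (hgmem v) (h.trans hrank.symm)))
    · rintro (rfl | h) <;> omega
  · rintro ⟨u, huA, hadj, hlt⟩
    rw [hmem] at huA
    have hlex := lex_of_rank_lt (n := n) (b := b) (hgmem u) (hgmem v) (by omega)
    have := seg_le_of_lex (hg1 u) (hg1 v) (hband' u v hadj).1 (hband' u v hadj).2 hlex
    have h2 : (bwSegment b (g v) : ℤ) ≤ (bwSegment b (g u) : ℤ) := by exact_mod_cast this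
    have hlt' : (bwSegment b ((π u : ℕ) + 1) : ℤ) < (bwSegment b ((π v : ℕ) + 1) : ℤ) := hlt
    simp only [hg] at h2
    omega
end

section
/- Let G be a connected graph on n vertices, let d be a positive integer, and let π : V → ℤ be an injective pushing embedding. Then π has expansion at most d, i.e., |π(u) − π(v)| ≤ d · d_G(u, v) for all distinct u, v ∈ V, if and only if for every edge uv ∈ E we have |segment(π(u)) − segment(π(v))| ≤ 1, and whenever segment(π(u)) + 1 = segment(π(v)) we have color(π(u)) > color(π(v)). -/
/-- An embedding `π : V → ℤ` is pushing if whenever `u` and `w` are consecutive in the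
order of positions (no vertex is placed strictly between them), `π w - π u = d_G(u, w)`. -/
def IsPushing {V : Type*} (G : SimpleGraph V) (π : V → ℤ) : Prop :=
  ∀ u w, π u < π w → (∀ x, ¬ (π u < π x ∧ π x < π w)) → π w - π u = (G.dist u w : ℤ)

/-- `segment` of an integer position `i`: `⌈i/(d+1)⌉`. -/
def distSegment (d : ℕ) (i : ℤ) : ℤ := ⌈(i : ℚ) / ((d : ℚ) + 1)⌉

/-- `color` of an integer position `i`: `((i-1) mod (d+1)) + 1`. -/
def distColor (d : ℕ) (i : ℤ) : ℤ := (i - 1) % ((d : ℤ) + 1) + 1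


lemma seg_color_spec (d : ℕ) (i : ℤ) :
    i = ((d : ℤ) + 1) * (distSegment d i - 1) + distColor d i ∧
      1 ≤ distColor d i ∧ distColor d i ≤ (d : ℤ) + 1 := by
  have hm0 : (0 : ℤ) < (d : ℤ) + 1 := by positivity
  have hr0 : 0 ≤ (i - 1) % ((d : ℤ) + 1) := Int.emod_nonneg _ (by omega)
  have hr1 : (i - 1) % ((d : ℤ) + 1) < (d : ℤ) + 1 := Int.emod_lt_of_pos _ hm0
  have hdm : ((d : ℤ) + 1) * ((i - 1) / ((d : ℤ) + 1)) + (i - 1) % ((d : ℤ) + 1) = i - 1 :=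
    Int.mul_ediv_add_emod _ _
  have hmq : (0 : ℚ) < (d : ℚ) + 1 := by positivity
  have hseg : distSegment d i = (i - 1) / ((d : ℤ) + 1) + 1 := by
    rw [distSegment, Int.ceil_eq_iff]
    constructor
    · rw [lt_div_iff₀ hmq]
      have h1 : ((d : ℤ) + 1) * ((i - 1) / ((d : ℤ) + 1)) < i := by omega
      have h2 := (Int.cast_lt (R := ℚ)).mpr h1
      push_cast at h2 ⊢
      nlinarith [h2]
    · rw [div_le_iff₀ hmq]
      have h1 : i ≤ ((d : ℤ) + 1) * ((i - 1) / ((d : ℤ) + 1) + 1) := by nlinarith [hdm, hr1]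
      have h2 := (Int.cast_le (R := ℚ)).mpr h1
      push_cast at h2 ⊢
      nlinarith [h2]
  refine ⟨?_, by rw [distColor]; omega, by rw [distColor]; omega⟩
  rw [hseg, distColor]
  linarith [hdm]

lemma seg_mono (d : ℕ) {i j : ℤ} (h : i ≤ j) : distSegment d i ≤ distSegment d j := by
  obtain ⟨hi, hci1, hci2⟩ := seg_color_spec d i
  obtain ⟨hj, hcj1, hcj2⟩ := seg_color_spec d j
  by_contra hc
  push_neg at hc
  have h1 : distSegment d j - 1 + 1 ≤ distSegment d i - 1 := by omega
  have := mul_le_mul_of_nonneg_left h1 (le_of_lt (show (0:ℤ) < (d:ℤ)+1 by positivity))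
  nlinarith

lemma key_lemma (d : ℕ) {i j : ℤ} (hij : i < j) :
    (|distSegment d i - distSegment d j| ≤ 1 ∧
      (distSegment d i + 1 = distSegment d j → distColor d i > distColor d j)) ↔
    j - i ≤ (d : ℤ) := by
  obtain ⟨hi, hci1, hci2⟩ := seg_color_spec d i
  obtain ⟨hj, hcj1, hcj2⟩ := seg_color_spec d j
  have hm0 : (0 : ℤ) < (d : ℤ) + 1 := by positivity
  have hmono : distSegment d i ≤ distSegment d j := seg_mono d hij.le
  constructor
  · rintro ⟨habs, hcol⟩
    rw [abs_le] at habs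
    rcases eq_or_lt_of_le hmono with heq | hlt
    · have hms : ((d:ℤ)+1) * (distSegment d j - 1) = ((d:ℤ)+1) * (distSegment d i - 1) := by
        rw [heq]
      linarith
    · have heq1 : distSegment d j = distSegment d i + 1 := by omega
      have hcc := hcol heq1.symm
      have hms : ((d:ℤ)+1) * (distSegment d j - 1)
          = ((d:ℤ)+1) * (distSegment d i - 1) + ((d:ℤ)+1) := by rw [heq1]; ring
      linarith
  · intro hle
    have hup : distSegment d j ≤ distSegment d i + 1 := by
      by_contra hc
      push_neg at hc
      have h1 : distSegment d i - 1 + 2 ≤ distSegment d j - 1 := by omega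
      have := mul_le_mul_of_nonneg_left h1 hm0.le
      nlinarith
    refine ⟨by rw [abs_le]; omega, fun hseq => ?_⟩
    have hms : ((d:ℤ)+1) * (distSegment d j - 1)
        = ((d:ℤ)+1) * (distSegment d i - 1) + ((d:ℤ)+1) := by rw [← hseq]; ring
    linarith

lemma walk_bound {V : Type*} {G : SimpleGraph V} (π : V → ℤ) (d : ℤ)
    (hedge : ∀ a b, G.Adj a b → |π a - π b| ≤ d) :
    ∀ {u v : V} (p : G.Walk u v), |π u - π v| ≤ d * p.length := by
  intro u v p
  induction p with
  | nil => simp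
  | @cons a b c h q ih =>
    calc |π a - π c| ≤ |π a - π b| + |π b - π c| := abs_sub_le _ _ _
      _ ≤ d + d * q.length := add_le_add (hedge a b h) ih
      _ = d * (q.length + 1 : ℕ) := by push_cast; ring
      _ = d * ((SimpleGraph.Walk.cons h q).length) := by rw [SimpleGraph.Walk.length_cons]

/-- a pushing embedding has expansion at most `d` iff every edge satisfies the
segment/color condition. -/
theorem pushing_expansion_iff_segment_color {V : Type*} [Fintype V] (G : SimpleGraph V)
    (n d : ℕ) (hn : Fintype.card V = n) (hd : 1 ≤ d) (hG : G.Connected)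
    (π : V → ℤ) (hinj : Function.Injective π) (hpush : IsPushing G π) :
    (∀ u v, u ≠ v → |π u - π v| ≤ (d : ℤ) * (G.dist u v : ℤ)) ↔
    (∀ u v, G.Adj u v →
      |distSegment d (π u) - distSegment d (π v)| ≤ 1 ∧
      (distSegment d (π u) + 1 = distSegment d (π v) →
        distColor d (π u) > distColor d (π v))) := by
  constructor
  · intro h u v hadj
    have hne : u ≠ v := hadj.ne
    have hdist : G.dist u v = 1 := SimpleGraph.dist_eq_one_iff_adj.mpr hadj
    have hle : |π u - π v| ≤ (d : ℤ) := by
      have := h u v hne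
      rw [hdist] at this
      simpa using this
    rcases lt_trichotomy (π u) (π v) with hlt | heq | hgt
    · exact (key_lemma d hlt).mpr (by rw [abs_of_neg (by omega)] at hle; omega)
    · exact absurd (hinj heq) hne
    · have h2 := (key_lemma d hgt).mpr (by rw [abs_of_pos (by omega)] at hle; omega)
      refine ⟨by rw [abs_sub_comm]; exact h2.1, fun hseq => ?_⟩
      have := seg_mono d hgt.le
      omega
  · intro h u v hne
    have hedge : ∀ a b, G.Adj a b → |π a - π b| ≤ (d : ℤ) := by
      intro a b hadj
      rcases lt_trichotomy (π a) (π b) with hlt | heq | hgt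
      · have := (key_lemma d hlt).mp (h a b hadj)
        rw [abs_of_neg (by omega)]; omega
      · exact absurd (hinj heq) hadj.ne
      · have := (key_lemma d hgt).mp ⟨by rw [abs_sub_comm]; exact (h a b hadj).1,
          fun hseq => (h b a hadj.symm).2 hseq⟩
        rw [abs_of_pos (by omega)]; omega
    obtain ⟨p, hp⟩ := hG.exists_walk_length_eq_dist u v
    calc |π u - π v| ≤ (d : ℤ) * p.length := walk_bound π d hedge p
      _ = (d : ℤ) * (G.dist u v : ℤ) := by rw [hp]
end

section
/- Let n ≥ 1 and let P be the path graph with vertex set {v_0, v_1, …, v_n} and edges v_i v_{i+1} for 0 ≤ i < n. Fix any j ∈ ℤ. Then the number of partial bucket functions (A, f) on P with v_0 ∈ A and f(v_0) = j is at most 4.26 · 4.383^{n−1}. -/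
/-- Partial bucket functions `(A, f)` on the path `v_0 v_1 ⋯ v_n` (encoded by `f` vanishing
outside `A`) with `v_0 ∈ A` and `f(v_0) = j`. -/
def pathPBFs (n : ℕ) (j : ℤ) : Set (Finset (Fin (n + 1)) × (Fin (n + 1) → ℤ)) :=
  {p | (∀ v ∉ p.1, p.2 v = 0) ∧ (0 : Fin (n + 1)) ∈ p.1 ∧ p.2 0 = j ∧
       ∃ fbar, IsBucketExtension (SimpleGraph.pathGraph (n + 1)) ↑p.1 p.2 fbar}

/-!
Scan the path from `v_0` and record, for each later vertex, either that it lies outside `A` or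
the increment of `f` over the previous vertex of `A`. If `g` vertices outside `A` separate two
consecutive vertices of `A`, a bucket extension is `1`-Lipschitz and can only drop when leaving
`A` at either end, so the increment has absolute value at most `max 1 g`. The recorded word
determines `(A, f)`. The number `c n g` of admissible words of length `n` after a gap `g`
satisfies `c (n + 1) g ≤ c n (g + 1) + (2 max 1 g + 1) c n 0`, and the potential `P 0 = 4.26`,
`P g = 3 g + 5 / 2` for `g ≥ 1` satisfies the same inequality with a factor `4.383`, whence
`c (n + 1) g ≤ P g * 4.383 ^ n`.
-/

open Finset SimpleGraph Fin.NatCast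

namespace PathPBF

/-- `codes n g` holds the admissible words of length `n` when the last vertex of `A` lies `g`
vertices back: `none` marks a vertex outside `A`, `some d` a vertex of `A` whose value exceeds
the previous one by `d`. -/
noncomputable def codes : ℕ → ℕ → Finset (List (Option ℤ))
  | 0, _ => {[]}
  | n + 1, g =>
      (codes n (g + 1)).image (none :: ·) ∪
        ((Icc (-max 1 (g : ℤ)) (max 1 g)) ×ˢ codes n 0).image fun p => some p.1 :: p.2

lemma card_codes_zero (g : ℕ) : #(codes 0 g) = 1 := rfl

lemma card_codes_succ_le (n g : ℕ) :
    #(codes (n + 1) g) ≤ #(codes n (g + 1)) + (2 * max 1 g + 1) * #(codes n 0) := by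
  refine (card_union_le _ _).trans (add_le_add card_image_le (card_image_le.trans ?_))
  rw [card_product, Int.card_Icc]
  gcongr
  omega

noncomputable def potential : ℕ → ℝ
  | 0 => 4.26
  | g + 1 => 3 * (g + 1) + 5 / 2

lemma one_add_weight_le_potential (g : ℕ) : 1 + ((2 * max 1 g + 1 : ℕ) : ℝ) ≤ potential g := by
  rcases g with _ | g
  · norm_num [potential]
  · rw [max_eq_right (by omega), potential]
    push_cast
    linarith [(g.cast_nonneg : (0 : ℝ) ≤ g)]

lemma potential_succ_add_le (g : ℕ) :
    potential (g + 1) + ((2 * max 1 g + 1 : ℕ) : ℝ) * potential 0 ≤ 4.383 * potential g := by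
  rcases g with _ | g
  · norm_num [potential]
  · rw [max_eq_right (by omega), potential, potential, potential]
    push_cast
    linarith [(g.cast_nonneg : (0 : ℝ) ≤ g)]

lemma card_codes_succ_le_potential (n : ℕ) :
    ∀ g, (#(codes (n + 1) g) : ℝ) ≤ potential g * 4.383 ^ n := by
  induction n with
  | zero =>
    intro g
    have hcard : (#(codes 1 g) : ℝ) ≤ 1 + ((2 * max 1 g + 1 : ℕ) : ℝ) := by
      exact_mod_cast (by simpa [card_codes_zero] using card_codes_succ_le 0 g)
    simpa using hcard.trans (one_add_weight_le_potential g)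
  | succ n ih =>
    intro g
    calc (#(codes (n + 2) g) : ℝ)
        ≤ #(codes (n + 1) (g + 1)) + ((2 * max 1 g + 1 : ℕ) : ℝ) * #(codes (n + 1) 0) := by
          exact_mod_cast card_codes_succ_le (n + 1) g
      _ ≤ (potential (g + 1) + ((2 * max 1 g + 1 : ℕ) : ℝ) * potential 0) * 4.383 ^ n := by
          rw [add_mul, mul_assoc]
          gcongr
          exacts [ih _, ih _]
      _ ≤ 4.383 * potential g * 4.383 ^ n := by gcongr; exact potential_succ_add_le g
      _ = potential g * 4.383 ^ (n + 1) := by ring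

lemma card_codes_le (n : ℕ) : (#(codes n 0) : ℝ) ≤ 4.26 * 4.383 ^ (n - 1) := by
  rcases n with _ | n
  · norm_num [card_codes_zero]
  · simpa [potential] using card_codes_succ_le_potential n 0

lemma abs_sub_le_of_abs_succ_sub_le {F : ℕ → ℤ} {a : ℕ} :
    ∀ m, (∀ i, a ≤ i → i < a + m → |F (i + 1) - F i| ≤ 1) → |F (a + m) - F a| ≤ m
  | 0, _ => by simp
  | m + 1, hstep => by
    have hlast := hstep (a + m) (by omega) (by omega)
    have hinit := abs_sub_le_of_abs_succ_sub_le m fun i hi hi' => hstep i hi (by omega)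
    calc |F (a + (m + 1)) - F a| ≤ |F (a + m + 1) - F (a + m)| + |F (a + m) - F a| :=
          abs_sub_le _ _ _
      _ ≤ (m + 1 : ℕ) := by push_cast; linarith

lemma abs_sub_le_max_of_drops {F : ℕ → ℤ} {a g : ℕ}
    (hstep : ∀ i, a ≤ i → i < a + g + 1 → |F (i + 1) - F i| ≤ 1)
    (hleft : 0 < g → F (a + 1) ≤ F a) (hright : 0 < g → F (a + g) ≤ F (a + g + 1)) :
    |F (a + g + 1) - F a| ≤ max 1 (g : ℤ) := by
  rcases Nat.eq_zero_or_pos g with rfl | hg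
  · simpa using hstep a le_rfl (by omega)
  have hfrom := abs_sub_le_of_abs_succ_sub_le (a := a + 1) g
    fun i hi hi' => hstep i (by omega) (by omega)
  have hto := abs_sub_le_of_abs_succ_sub_le (a := a) g fun i hi hi' => hstep i hi (by omega)
  rw [show a + 1 + g = a + g + 1 by omega] at hfrom
  rw [abs_le] at hfrom hto ⊢
  constructor <;> linarith [hleft hg, hright hg, le_max_right 1 (g : ℤ)]

/-- The word read off positions `pos, …, pos + m - 1`, where `v` is the value of `F` at the last
point of `A` before `pos`. -/
noncomputable def encode (A : Finset ℕ) (F : ℕ → ℤ) : ℕ → ℤ → ℕ → List (Option ℤ)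
  | _, _, 0 => []
  | pos, v, m + 1 =>
      if pos ∈ A then some (F pos - v) :: encode A F (pos + 1) (F pos) m
      else none :: encode A F (pos + 1) v m

def GapBounded (A : Finset ℕ) (F : ℕ → ℤ) : Prop :=
  ∀ a g, a ∈ A → a + g + 1 ∈ A → (∀ k, a < k → k ≤ a + g → k ∉ A) →
    |F (a + g + 1) - F a| ≤ max 1 (g : ℤ)

lemma GapBounded.encode_mem_codes {A : Finset ℕ} {F : ℕ → ℤ} (hF : GapBounded A F) (m : ℕ) :
    ∀ a g, a ∈ A → (∀ k, a < k → k ≤ a + g → k ∉ A) →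
      encode A F (a + g + 1) (F a) m ∈ codes m g := by
  induction m with
  | zero => simp [encode, codes]
  | succ m ih =>
    intro a g ha hgap
    by_cases hb : a + g + 1 ∈ A
    · have hd := abs_le.1 (hF a g ha hb hgap)
      simp only [encode, hb, if_true, codes, mem_union, mem_image, mem_product, mem_Icc]
      exact Or.inr ⟨(_, _), ⟨⟨hd.1, hd.2⟩, ih (a + g + 1) 0 hb (by omega)⟩, rfl⟩
    · simp only [encode, hb, if_false, codes, mem_union, mem_image]
      refine Or.inl ⟨_, ih a (g + 1) ha fun k hk hk' => ?_, rfl⟩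
      rcases Nat.lt_or_ge k (a + g + 1) with h | h
      · exact hgap k hk (by omega)
      · rwa [show k = a + g + 1 by omega]

lemma mem_iff_and_eq_of_encode_eq {A B : Finset ℕ} {F G : ℕ → ℤ} (m : ℕ) :
    ∀ pos v, encode A F pos v m = encode B G pos v m →
      ∀ k, pos ≤ k → k < pos + m → (k ∈ A ↔ k ∈ B) ∧ (k ∈ A → F k = G k) := by
  induction m with
  | zero => intro pos v _ k h h'; omega
  | succ m ih =>
    intro pos v heq k hk hk'
    by_cases hA : pos ∈ A <;> by_cases hB : pos ∈ B <;>
      simp only [encode, hA, hB, if_true, if_false, List.cons.injEq, reduceCtorEq,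
        false_and, Option.some.injEq] at heq
    · obtain ⟨hd, htail⟩ := heq
      have hF : F pos = G pos := by linarith
      rcases hk.eq_or_lt with rfl | hk
      · exact ⟨iff_of_true hA hB, fun _ => hF⟩
      · exact ih _ _ (hF ▸ htail) k hk (by omega)
    · rcases hk.eq_or_lt with rfl | hk
      · exact ⟨iff_of_false hA hB, fun h => absurd h hA⟩
      · exact ih _ _ heq.2 k hk (by omega)

lemma pathGraph_adj_natCast_succ {n i : ℕ} (hi : i < n) :
    (pathGraph (n + 1)).Adj (i : Fin (n + 1)) ((i + 1 : ℕ) : Fin (n + 1)) := by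
  rw [pathGraph_adj, Fin.val_cast_of_lt (by omega), Fin.val_cast_of_lt (by omega)]
  exact Or.inl rfl

variable {n : ℕ}

lemma IsBucketExtension.gapBounded {A : Finset (Fin (n + 1))} {f fbar : Fin (n + 1) → ℤ}
    (h : IsBucketExtension (pathGraph (n + 1)) A f fbar) :
    GapBounded {k ∈ range (n + 1) | (k : Fin (n + 1)) ∈ A} fun k => f k := by
  intro a g ha hb hgap
  simp only [mem_filter, mem_range] at ha hb hgap
  have hout : ∀ k, a < k → k ≤ a + g → (k : Fin (n + 1)) ∉ A :=
    fun k hk hk' hkA => hgap k hk hk' ⟨by omega, hkA⟩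
  dsimp only
  rw [← h.1 _ ha.2, ← h.1 _ hb.2]
  refine abs_sub_le_max_of_drops (F := fun k : ℕ => fbar k)
    (fun i _ hi => ?_) (fun hg => ?_) (fun hg => ?_)
  · rw [abs_sub_comm]
    exact h.2.1 _ _ (pathGraph_adj_natCast_succ (by omega))
  · exact h.2.2 _ _ (pathGraph_adj_natCast_succ (by omega)) ha.2 (hout _ (by omega) (by omega))
  · exact h.2.2 _ _ (pathGraph_adj_natCast_succ (by omega)).symm hb.2 (hout _ (by omega) le_rfl)

noncomputable def pbfCode (n : ℕ) (p : Finset (Fin (n + 1)) × (Fin (n + 1) → ℤ)) :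
    List (Option ℤ) :=
  encode {k ∈ range (n + 1) | (k : Fin (n + 1)) ∈ p.1} (fun k => p.2 k) 1 (p.2 0) n

lemma mapsTo_pbfCode (j : ℤ) : Set.MapsTo (pbfCode n) (pathPBFs n j) (codes n 0) := by
  rintro ⟨A, f⟩ ⟨-, h0, -, fbar, hext⟩
  simpa [pbfCode] using
    (IsBucketExtension.gapBounded hext).encode_mem_codes n 0 0 (by simpa using h0) (by omega)

lemma injOn_pbfCode (j : ℤ) : Set.InjOn (pbfCode n) (pathPBFs n j) := by
  rintro ⟨A, f⟩ ⟨hfA, hA0, hf0, -⟩ ⟨B, g⟩ ⟨hgB, hB0, hg0, -⟩ heq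
  dsimp only [pbfCode] at heq hfA hgB hA0 hB0 hf0 hg0
  rw [hf0, hg0] at heq
  have hagree : ∀ x : Fin (n + 1), (x ∈ A ↔ x ∈ B) ∧ (x ∈ A → f x = g x) := by
    intro x
    by_cases hx : x = 0
    · subst hx
      exact ⟨iff_of_true hA0 hB0, fun _ => hf0.trans hg0.symm⟩
    · have hx1 : 1 ≤ x.val := Nat.one_le_iff_ne_zero.2 (Fin.val_ne_zero_iff.2 hx)
      simpa [x.isLt] using mem_iff_and_eq_of_encode_eq n 1 j heq x hx1 (by omega)
  have hAB : A = B := Finset.ext fun x => (hagree x).1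
  refine Prod.ext hAB (funext fun x => ?_)
  by_cases hx : x ∈ A
  · exact (hagree x).2 hx
  · exact (hfA x hx).trans (hgB x (hAB ▸ hx)).symm

end PathPBF

theorem path_pbf_count_general (n : ℕ) (j : ℤ) :
    (pathPBFs n j).Finite ∧
    ((pathPBFs n j).ncard : ℝ) ≤ 4.26 * 4.383 ^ (n - 1) := by
  have hmaps := PathPBF.mapsTo_pbfCode (n := n) j
  have hinj := PathPBF.injOn_pbfCode (n := n) j
  refine ⟨(PathPBF.codes n 0).finite_toSet.of_injOn hmaps hinj, ?_⟩
  have hcard : (pathPBFs n j).ncard ≤ #(PathPBF.codes n 0) := by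
    simpa using Set.ncard_le_ncard_of_injOn _ hmaps hinj
  exact (Nat.cast_le.2 hcard).trans (PathPBF.card_codes_le n)

/-- on the path with vertices `v_0, …, v_n` (`n ≥ 1`), the number of partial
bucket functions `(A, f)` with `v_0 ∈ A` and `f(v_0) = j` is at most `4.26 · 4.383^{n-1}`. -/
theorem path_pbf_count (n : ℕ) (hn : 1 ≤ n) (j : ℤ) :
    (pathPBFs n j).Finite ∧
    ((pathPBFs n j).ncard : ℝ) ≤ 4.26 * 4.383 ^ (n - 1) :=
  path_pbf_count_general n j
end
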